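/- Let A be a closed symmetric linear relation in 𝔥 and let {𝓗,Γ} be an isometric boundary pair for A* with T = dom Γ whose closure (in 𝔥×𝔥) equals A*. Let Ã := {((f,h),(f',−h')) : ((f,f'),(h,h')) ∈ Γ} be the main transform of Γ, a linear relation in the Hilbert space 𝔥 ⊕ 𝓗. Assume there exists a selfadjoint relation H̃ with A ⊆ H̃ ⊆ T and a real point x ∈ ℝ with (H̃−x)⁻¹ ∈ 𝓑(𝔥), and define M(x) := {(h,h') ∈ 𝓗×𝓗 : ((f,xf),(h,h')) ∈ Γ for some f}. Then: (i) the conditions [M(x) is a selfadjoint relation in 𝓗 and (M(x)+x)⁻¹ ∈ 𝓑(𝓗)] and [(Ã−x)⁻¹ ∈ 𝓑(𝔥⊕𝓗)] are equivalent; (ii) if these conditions hold, then Ã is a selfadjoint relation in 𝔥 ⊕ 𝓗 and {𝓗,Γ} is a unitary boundary pair for A*, i.e. Γ⁻¹ = Γ^[*]. -/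
import Mathlib


noncomputable section

open Filter Topology

namespace BT

local notation "⟪" x ", " y "⟫" => @inner ℂ _ _ x y

section Ops
variable {α β γ' : Type*}

def domR (T : Set (α × β)) : Set α := {x | ∃ y, (x, y) ∈ T}
def ranR (T : Set (α × β)) : Set β := {y | ∃ x, (x, y) ∈ T}
def kerR [Zero β] (T : Set (α × β)) : Set α := {x | (x, (0 : β)) ∈ T}
def mulR [Zero α] (T : Set (α × β)) : Set β := {y | ((0 : α), y) ∈ T}
def invR (T : Set (α × β)) : Set (β × α) := {p | (p.2, p.1) ∈ T}
def compR (T₂ : Set (β × γ')) (T₁ : Set (α × β)) : Set (α × γ') :=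
  {p | ∃ y, (p.1, y) ∈ T₁ ∧ (y, p.2) ∈ T₂}
def csum [Add α] [Add β] (T₁ T₂ : Set (α × β)) : Set (α × β) :=
  {p | ∃ q ∈ T₁, ∃ r ∈ T₂, p = (q.1 + r.1, q.2 + r.2)}

def IsLinRel {M : Type*} [AddCommGroup M] [Module ℂ M] (s : Set M) : Prop :=
  ∃ p : Submodule ℂ M, (p : Set M) = s

def IsBddRel [Norm α] [Norm β] (T : Set (α × β)) : Prop :=
  ∃ C : ℝ, ∀ p ∈ T, ‖p.2‖ ≤ C * ‖p.1‖

def BddInv [NormedAddCommGroup α] (T : Set (α × α)) : Prop :=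
  (∀ v, ∃ p ∈ T, p.2 = v) ∧ (∀ p ∈ T, ∀ q ∈ T, p.2 = q.2 → p.1 = q.1) ∧
    ∃ C : ℝ, ∀ p ∈ T, ‖p.1‖ ≤ C * ‖p.2‖
end Ops

section Shifts
variable {α : Type*} [AddCommGroup α] [Module ℂ α]

def shiftSub (T : Set (α × α)) (l : ℂ) : Set (α × α) :=
  {p | ∃ q ∈ T, p = (q.1, q.2 - l • q.1)}
def shiftAdd (T : Set (α × α)) (l : ℂ) : Set (α × α) :=
  {p | ∃ q ∈ T, p = (q.1, q.2 + l • q.1)}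
def hatN (T : Set (α × α)) (l : ℂ) : Set (α × α) := {p ∈ T | p.2 = l • p.1}
def Nlam (T : Set (α × α)) (l : ℂ) : Set α := {f | (f, l • f) ∈ T}
def Hrel (A0s : Set (α × α)) (l : ℂ) : Set (α × (α × α)) :=
  {q | q.2 ∈ A0s ∧ q.2.2 - l • q.2.1 = q.1}
end Shifts

section InnerDefs
variable {E F : Type*} [NormedAddCommGroup E] [InnerProductSpace ℂ E]
  [NormedAddCommGroup F] [InnerProductSpace ℂ F]

def adjR (S : Set (F × E)) : Set (E × F) :=
  {p | ∀ q ∈ S, ⟪p.1, q.2⟫ = ⟪p.2, q.1⟫}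

def IsClosedSymRel (A : Set (E × E)) : Prop :=
  IsLinRel A ∧ IsClosed A ∧ A ⊆ adjR A

def kIP (p q : E × E) : ℂ := -Complex.I * ⟪q.1, p.2⟫ + Complex.I * ⟪q.2, p.1⟫

def kreinOrth (S : Set (E × E)) : Set (E × E) := {v | ∀ u ∈ S, kIP u v = 0}

def GreenPair (Γ : Set ((E × E) × (F × F))) : Prop :=
  ∀ p ∈ Γ, ∀ q ∈ Γ,
    ⟪q.1.1, p.1.2⟫ - ⟪q.1.2, p.1.1⟫ = ⟪q.2.1, p.2.2⟫ - ⟪q.2.2, p.2.1⟫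

def G0 (Γ : Set ((E × E) × (F × F))) : Set ((E × E) × F) := {p | ∃ h', (p.1, (p.2, h')) ∈ Γ}
def G1 (Γ : Set ((E × E) × (F × F))) : Set ((E × E) × F) := {p | ∃ h, (p.1, (h, p.2)) ∈ Γ}
def A0 (Γ : Set ((E × E) × (F × F))) : Set (E × E) := kerR (G0 Γ)
def A1 (Γ : Set ((E × E) × (F × F))) : Set (E × E) := kerR (G1 Γ)
def weyl (Γ : Set ((E × E) × (F × F))) (l : ℂ) : Set (F × F) :=
  {p | ∃ f : E, ((f, l • f), p) ∈ Γ}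
def gfield (Γ : Set ((E × E) × (F × F))) (l : ℂ) : Set (F × E) :=
  {p | ∃ h', ((p.2, l • p.2), (p.1, h')) ∈ Γ}

def kreinAdj (Γ : Set ((E × E) × (F × F))) : Set ((F × F) × (E × E)) :=
  {q | ∀ p ∈ Γ, kIP p.1 q.2 = kIP p.2 q.1}

def IsIsomPair (A : Set (E × E)) (Γ : Set ((E × E) × (F × F))) : Prop :=
  IsLinRel Γ ∧ domR Γ ⊆ adjR A ∧ GreenPair Γ
def IsDomDense (A : Set (E × E)) (Γ : Set ((E × E) × (F × F))) : Prop :=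
  closure (domR Γ) = adjR A
def IsABPair (A : Set (E × E)) (Γ : Set ((E × E) × (F × F))) : Prop :=
  IsIsomPair A Γ ∧ IsDomDense A Γ ∧ Dense (ranR (G0 Γ)) ∧ A0 Γ = adjR (A0 Γ)
def IsBPair (A : Set (E × E)) (Γ : Set ((E × E) × (F × F))) : Prop :=
  IsABPair A Γ ∧ ranR (G0 Γ) = Set.univ
def IsUnitaryPair (A : Set (E × E)) (Γ : Set ((E × E) × (F × F))) : Prop :=
  GreenPair Γ ∧ domR Γ ⊆ adjR A ∧ IsDomDense A Γ ∧ invR Γ = kreinAdj Γ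
def IsUnitaryBT (A : Set (E × E)) (Γ : Set ((E × E) × (F × F))) : Prop :=
  IsUnitaryPair A Γ ∧ mulR Γ = {0}
def IsOrdinaryBT (A : Set (E × E)) (Γ : Set ((E × E) × (F × F))) : Prop :=
  IsIsomPair A Γ ∧ mulR Γ = {0} ∧ domR Γ = adjR A ∧ ranR Γ = Set.univ

def Erel (Γ : Set ((E × E) × (F × F))) (m : ℂ) : Set (F × F) :=
  {p | ∃ u' v', (p.1, u') ∈ weyl Γ m ∧ (p.1, v') ∈ weyl Γ ((starRingEnd ℂ) m) ∧
        p.2 = (2 : ℂ)⁻¹ • (u' + v')}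

def triTransform (Γ : Set ((E × E) × (F × F))) (e : Set (F × F)) :
    Set ((E × E) × (F × F)) :=
  {q | ∃ h h' w, (q.1, (h, h')) ∈ Γ ∧ (h, w) ∈ e ∧ q.2 = (h, w + h')}

def formVal (l : ℂ) (u u' : F) : ℝ :=
  ((l - (starRingEnd ℂ) l)⁻¹ * (⟪u, u'⟫ - ⟪u', u⟫)).re

def FormClosable (l : ℂ) (Ms : Set (F × F)) : Prop :=
  ∀ u u' : ℕ → F, (∀ n, (u n, u' n) ∈ Ms) →
    Tendsto u atTop (nhds (0 : F)) →
    Tendsto (fun nm : ℕ × ℕ => formVal l (u nm.1 - u nm.2) (u' nm.1 - u' nm.2)) atTop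
      (nhds (0 : ℝ)) →
    Tendsto (fun n => formVal l (u n) (u' n)) atTop (nhds (0 : ℝ))

def formClosureDom (l : ℂ) (Ms : Set (F × F)) : Set F :=
  {v | ∃ u u' : ℕ → F, (∀ n, (u n, u' n) ∈ Ms) ∧ Tendsto u atTop (nhds v) ∧
    Tendsto (fun nm : ℕ × ℕ => formVal l (u nm.1 - u nm.2) (u' nm.1 - u' nm.2)) atTop
      (nhds (0 : ℝ))}

end InnerDefs

section CompleteDefs
variable {F : Type*} [NormedAddCommGroup F] [InnerProductSpace ℂ F] [CompleteSpace F]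

def IsNevFun (M₀ : ℂ → F →L[ℂ] F) : Prop :=
  DifferentiableOn ℂ M₀ {l : ℂ | l.im ≠ 0} ∧
  (∀ l : ℂ, l.im ≠ 0 → M₀ ((starRingEnd ℂ) l) = ContinuousLinearMap.adjoint (M₀ l)) ∧
  (∀ l : ℂ, 0 < l.im → ∀ u, 0 ≤ (⟪u, M₀ l u⟫).im)

def ImOp (Tb : F →L[ℂ] F) : F →L[ℂ] F :=
  ((2 : ℂ) * Complex.I)⁻¹ • (Tb - ContinuousLinearMap.adjoint Tb)

end CompleteDefs

variable {E F : Type*} [NormedAddCommGroup E] [InnerProductSpace ℂ E] [CompleteSpace E]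
  [NormedAddCommGroup F] [InnerProductSpace ℂ F] [CompleteSpace F]

/-- An element of the Hilbert space `𝔥 ⊕ 𝓗` (the `ℓ²`-product). -/
def pairHK (f : E) (h : F) : WithLp 2 (E × F) := (WithLp.equiv 2 (E × F)).symm (f, h)

/-- The main transform `Ã = {((f,h),(f',−h')) : ((f,f'),(h,h')) ∈ Γ}` of a boundary
pair, a linear relation in `𝔥 ⊕ 𝓗`. -/
def mainTransform (Γ : Set ((E × E) × (F × F))) :
    Set (WithLp 2 (E × F) × WithLp 2 (E × F)) :=
  {q | ∃ f f' : E, ∃ h h' : F, ((f, f'), (h, h')) ∈ Γ ∧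
    q = (pairHK f h, pairHK f' (-h'))}


/-! ### Auxiliary lemmas -/

section AuxGeneral
variable {K : Type*} [NormedAddCommGroup K] [InnerProductSpace ℂ K]

/-- Closure of a relation under addition and scalar multiplication. -/
def ClRel (S : Set (K × K)) : Prop :=
  (∀ p ∈ S, ∀ q ∈ S, (p.1 + q.1, p.2 + q.2) ∈ S) ∧
  (∀ (a : ℂ), ∀ p ∈ S, (a • p.1, a • p.2) ∈ S)

lemma ker_adj_triv (S : Set (K × K)) (c : ℝ)
    (hsurj : ∀ v, ∃ p ∈ S, p.2 - (c : ℂ) • p.1 = v) :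
    ∀ w : K, (w, (c : ℂ) • w) ∈ adjR S → w = 0 := by
  intro w hw
  obtain ⟨p, hp, hpv⟩ := hsurj w
  have h1 : ⟪w, p.2⟫ = ⟪(c : ℂ) • w, p.1⟫ := hw p hp
  have h2 : ⟪w, p.2 - (c : ℂ) • p.1⟫ = 0 := by
    rw [inner_sub_right, inner_smul_right]
    rw [inner_smul_left] at h1
    simp only [Complex.conj_ofReal] at h1
    rw [h1]; ring
  rw [hpv, inner_self_eq_zero] at h2
  exact h2

lemma adjR_sub' (S : Set (K × K)) {p q : K × K} (hp : p ∈ adjR S) (hq : q ∈ adjR S) :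
    (p.1 - q.1, p.2 - q.2) ∈ adjR S := by
  intro r hr
  have h1 := hp r hr
  have h2 := hq r hr
  simp only [inner_sub_left]
  rw [h1, h2]

/-- A symmetric relation with a real point of full range is selfadjoint. -/
lemma sa_of_sym_surj (S : Set (K × K)) (hsym : S ⊆ adjR S) (c : ℝ)
    (hsurj : ∀ v, ∃ p ∈ S, p.2 - (c : ℂ) • p.1 = v) : adjR S = S := by
  apply Set.Subset.antisymm _ hsym
  rintro ⟨g, k⟩ hgk
  obtain ⟨p, hp, hpv⟩ := hsurj (k - (c : ℂ) • g)
  have hd : ((g, k).1 - p.1, (g, k).2 - p.2) ∈ adjR S := adjR_sub' S hgk (hsym hp)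
  have key : k - p.2 = (c : ℂ) • (g - p.1) := by
    linear_combination (norm := module) -hpv
  have hker : (g - p.1, (c : ℂ) • (g - p.1)) ∈ adjR S := by
    have hd' : (g - p.1, k - p.2) ∈ adjR S := hd
    rwa [key] at hd'
  have hz : g - p.1 = 0 := ker_adj_triv S c hsurj _ hker
  have hg : g = p.1 := by rwa [sub_eq_zero] at hz
  have hk : k = p.2 := by
    rw [hz, smul_zero, sub_eq_zero] at key
    exact key
  rw [hg, hk]
  simpa using hp

/-- A symmetric relation with a real point of full range has a bounded inverse there
(Hellinger--Toeplitz). -/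
lemma bddinv_of [CompleteSpace K] (S : Set (K × K)) (hcl : ClRel S) (hsym : S ⊆ adjR S)
    (c : ℝ) (hsurj : ∀ v, ∃ p ∈ S, p.2 - (c : ℂ) • p.1 = v) :
    BddInv (shiftSub S ((c : ℝ) : ℂ)) := by
  have uniq : ∀ u u' v : K, (∃ p ∈ S, p.1 = u ∧ p.2 - (c : ℂ) • p.1 = v) →
      (∃ p ∈ S, p.1 = u' ∧ p.2 - (c : ℂ) • p.1 = v) → u = u' := by
    rintro u u' v ⟨p, hp, rfl, hpv⟩ ⟨q, hq, rfl, hqv⟩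
    have hd : (p.1 - q.1, p.2 - q.2) ∈ S := by
      have h2 := hcl.2 (-1) q hq
      have h3 := hcl.1 p hp _ h2
      simpa [sub_eq_add_neg] using h3
    have hkey : p.2 - q.2 = (c : ℂ) • (p.1 - q.1) := by
      linear_combination (norm := module) hpv - hqv
    have hmem : (p.1 - q.1, (c : ℂ) • (p.1 - q.1)) ∈ adjR S := by
      have hd' := hsym hd
      rwa [hkey] at hd'
    have hz := ker_adj_triv S c hsurj _ hmem
    rwa [sub_eq_zero] at hz
  have ex : ∀ v, ∃ u, ∃ p ∈ S, p.1 = u ∧ p.2 - (c : ℂ) • p.1 = v := by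
    intro v; obtain ⟨p, hp, hpv⟩ := hsurj v; exact ⟨p.1, p, hp, rfl, hpv⟩
  classical
  let Bf : K → K := fun v => (ex v).choose
  have hBf : ∀ v, ∃ p ∈ S, p.1 = Bf v ∧ p.2 - (c : ℂ) • p.1 = v := fun v => (ex v).choose_spec
  have hBval : ∀ v u, (∃ p ∈ S, p.1 = u ∧ p.2 - (c : ℂ) • p.1 = v) → Bf v = u := by
    intro v u hu; exact uniq _ _ _ (hBf v) hu
  have hadd : ∀ v w, Bf (v + w) = Bf v + Bf w := by
    intro v w
    obtain ⟨p, hp, hp1, hp2⟩ := hBf v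
    obtain ⟨q, hq, hq1, hq2⟩ := hBf w
    apply hBval
    refine ⟨(p.1 + q.1, p.2 + q.2), hcl.1 p hp q hq, by rw [hp1, hq1], ?_⟩
    simp only
    linear_combination (norm := module) hp2 + hq2
  have hsmul : ∀ (a : ℂ) v, Bf (a • v) = a • Bf v := by
    intro a v
    obtain ⟨p, hp, hp1, hp2⟩ := hBf v
    apply hBval
    refine ⟨(a • p.1, a • p.2), hcl.2 a p hp, by rw [hp1], ?_⟩
    simp only
    rw [smul_comm]
    linear_combination (norm := module) a • hp2
  let B : K →ₗ[ℂ] K := { toFun := Bf, map_add' := hadd, map_smul' := hsmul }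
  have hBsym : LinearMap.IsSymmetric B := by
    intro u v
    obtain ⟨p, hp, hp1, hp2⟩ := hBf u
    obtain ⟨q, hq, hq1, hq2⟩ := hBf v
    have hGr : ⟪p.1, q.2⟫ = ⟪p.2, q.1⟫ := hsym hp q hq
    have hp2' : p.2 = u + (c : ℂ) • Bf u := by
      rw [← hp1]; linear_combination (norm := module) hp2
    have hq2' : q.2 = v + (c : ℂ) • Bf v := by
      rw [← hq1]; linear_combination (norm := module) hq2
    rw [hp1, hq1, hp2', hq2'] at hGr
    rw [inner_add_right, inner_smul_right, inner_add_left, inner_smul_left,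
      Complex.conj_ofReal] at hGr
    show ⟪B u, v⟫ = ⟪u, B v⟫
    have hb1 : (B u : K) = Bf u := rfl
    have hb2 : (B v : K) = Bf v := rfl
    rw [hb1, hb2]
    linear_combination hGr
  have hcont : Continuous B := hBsym.continuous
  let Bc : K →L[ℂ] K := ⟨B, hcont⟩
  refine ⟨?_, ?_, ‖Bc‖, ?_⟩
  · intro v
    obtain ⟨p, hp, hpv⟩ := hsurj v
    exact ⟨(p.1, p.2 - (c : ℂ) • p.1), ⟨p, hp, rfl⟩, hpv⟩
  · rintro r ⟨p, hp, rfl⟩ s ⟨q, hq, rfl⟩ hv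
    simp only at hv ⊢
    exact uniq _ _ _ ⟨p, hp, rfl, rfl⟩ ⟨q, hq, rfl, by rw [hv]⟩
  · rintro r ⟨p, hp, rfl⟩
    simp only
    have hval : Bf (p.2 - (c : ℂ) • p.1) = p.1 := hBval _ _ ⟨p, hp, rfl, rfl⟩
    calc ‖p.1‖ = ‖Bc (p.2 - (c : ℂ) • p.1)‖ := by
          rw [show Bc (p.2 - (c : ℂ) • p.1) = Bf (p.2 - (c : ℂ) • p.1) from rfl, hval]
    _ ≤ ‖Bc‖ * ‖p.2 - (c : ℂ) • p.1‖ := Bc.le_opNorm _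

lemma shiftAdd_eq_shiftSub_neg {S : Set (K × K)} (x : ℝ) :
    shiftAdd S ((x : ℝ) : ℂ) = shiftSub S (((-x : ℝ) : ℝ) : ℂ) := by
  ext p
  constructor
  · rintro ⟨q, hq, rfl⟩
    exact ⟨q, hq, by push_cast; rw [neg_smul, sub_neg_eq_add]⟩
  · rintro ⟨q, hq, rfl⟩
    exact ⟨q, hq, by push_cast; rw [neg_smul, sub_neg_eq_add]⟩

end AuxGeneral

section AuxPair
variable {E F : Type*} [NormedAddCommGroup E] [InnerProductSpace ℂ E] [CompleteSpace E]
  [NormedAddCommGroup F] [InnerProductSpace ℂ F] [CompleteSpace F]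

lemma inner_pairHK (a c : E) (b d : F) :
    ⟪pairHK a b, pairHK c d⟫ = ⟪a, c⟫ + ⟪b, d⟫ := by
  rw [WithLp.prod_inner_apply]; rfl

lemma pairHK_inj {a c : E} {b d : F} (h : pairHK a b = pairHK c d) : a = c ∧ b = d :=
  ⟨congrArg (fun z : WithLp 2 (E × F) => z.fst) h,
   congrArg (fun z : WithLp 2 (E × F) => z.snd) h⟩

lemma mt_clrel (Γ : Set ((E × E) × (F × F))) (hlin : IsLinRel Γ) :
    ClRel (mainTransform Γ) := by
  obtain ⟨P, hP⟩ := hlin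
  constructor
  · rintro p ⟨f, f', h, h', hm, rfl⟩ q ⟨g, g', k, k', hm2, rfl⟩
    refine ⟨f + g, f' + g', h + k, h' + k', ?_, ?_⟩
    · rw [← hP] at hm hm2 ⊢
      exact P.add_mem hm hm2
    · simp only [neg_add]; rfl
  · rintro a p ⟨f, f', h, h', hm, rfl⟩
    refine ⟨a • f, a • f', a • h, a • h', ?_, ?_⟩
    · rw [← hP] at hm ⊢
      exact P.smul_mem a hm
    · simp only [← smul_neg]; rfl

lemma weyl_clrel (Γ : Set ((E × E) × (F × F))) (hlin : IsLinRel Γ) (l : ℂ) :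
    ClRel (weyl Γ l) := by
  obtain ⟨P, hP⟩ := hlin
  constructor
  · rintro p ⟨f, hm⟩ q ⟨g, hm2⟩
    refine ⟨f + g, ?_⟩
    rw [← hP] at hm hm2 ⊢
    have := P.add_mem hm hm2
    rwa [show l • (f + g) = l • f + l • g from smul_add l f g]
  · rintro a p ⟨f, hm⟩
    refine ⟨a • f, ?_⟩
    rw [← hP] at hm ⊢
    have := P.smul_mem a hm
    rwa [show l • (a • f) = a • (l • f) from smul_comm l a f]

lemma mt_sym (Γ : Set ((E × E) × (F × F))) (hG : GreenPair Γ) :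
    mainTransform Γ ⊆ adjR (mainTransform Γ) := by
  rintro p ⟨f, f', h, h', hm, rfl⟩ q ⟨g, g', k, k', hm2, rfl⟩
  simp only
  rw [inner_pairHK, inner_pairHK, inner_neg_right, inner_neg_left]
  have hGr := hG ((g, g'), (k, k')) hm2 ((f, f'), (h, h')) hm
  simp only at hGr
  linear_combination hGr

lemma weyl_sym (Γ : Set ((E × E) × (F × F))) (hG : GreenPair Γ) (x : ℝ) :
    weyl Γ ((x : ℝ) : ℂ) ⊆ adjR (weyl Γ ((x : ℝ) : ℂ)) := by
  rintro p ⟨f, hm⟩ q ⟨g, hm2⟩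
  have hGr := hG ((g, (x : ℂ) • g), q) hm2 ((f, (x : ℂ) • f), p) hm
  simp only [inner_smul_right, inner_smul_left, Complex.conj_ofReal] at hGr
  linear_combination -hGr

lemma mt_surj (Γ : Set ((E × E) × (F × F))) (hlin : IsLinRel Γ)
    (Ht : Set (E × E)) (hHT : Ht ⊆ domR Γ) (x : ℝ)
    (hHsurj : ∀ u : E, ∃ q ∈ Ht, q.2 - (x : ℂ) • q.1 = u)
    (hMsurj : ∀ w : F, ∃ p ∈ weyl Γ ((x : ℝ) : ℂ), p.2 + (x : ℂ) • p.1 = w) :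
    ∀ v : WithLp 2 (E × F), ∃ p ∈ mainTransform Γ, p.2 - (x : ℂ) • p.1 = v := by
  obtain ⟨P, hP⟩ := hlin
  intro v
  obtain ⟨q, hqH, hqv⟩ := hHsurj v.fst
  obtain ⟨kk, hkk⟩ := hHT hqH
  obtain ⟨m, hmW, hmv⟩ := hMsurj (-v.snd - (kk.2 + (x : ℂ) • kk.1))
  obtain ⟨e, he⟩ := hmW
  have hsum : ((q.1 + e, q.2 + (x : ℂ) • e), (kk.1 + m.1, kk.2 + m.2)) ∈ Γ := by
    rw [← hP] at hkk he ⊢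
    exact P.add_mem hkk he
  refine ⟨(pairHK (q.1 + e) (kk.1 + m.1), pairHK (q.2 + (x : ℂ) • e) (-(kk.2 + m.2))),
    ⟨q.1 + e, q.2 + (x : ℂ) • e, kk.1 + m.1, kk.2 + m.2, hsum, rfl⟩, ?_⟩
  simp only
  have hstep : pairHK (q.2 + (x : ℂ) • e) (-(kk.2 + m.2))
      - (x : ℂ) • pairHK (q.1 + e) (kk.1 + m.1)
      = pairHK (q.2 + (x : ℂ) • e - (x : ℂ) • (q.1 + e))
          (-(kk.2 + m.2) - (x : ℂ) • (kk.1 + m.1)) := rfl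
  rw [hstep]
  have h1 : q.2 + (x : ℂ) • e - (x : ℂ) • (q.1 + e) = v.fst := by
    linear_combination (norm := module) hqv
  have h2 : -(kk.2 + m.2) - (x : ℂ) • (kk.1 + m.1) = v.snd := by
    linear_combination (norm := module) -hmv
  rw [h1, h2]
  rfl

lemma M_surj (Γ : Set ((E × E) × (F × F))) (x : ℝ)
    (hA : ∀ v : WithLp 2 (E × F), ∃ p ∈ mainTransform Γ, p.2 - (x : ℂ) • p.1 = v) :
    ∀ w : F, ∃ p ∈ weyl Γ ((x : ℝ) : ℂ), p.2 + (x : ℂ) • p.1 = w := by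
  intro w
  obtain ⟨p, ⟨f, f', h, h', hm, rfl⟩, hv⟩ := hA (pairHK 0 (-w))
  simp only at hv
  have hv' : pairHK (f' - (x : ℂ) • f) (-h' - (x : ℂ) • h) = pairHK (0 : E) (-w) := hv
  obtain ⟨hc1, hc2⟩ := pairHK_inj hv'
  have hf' : f' = (x : ℂ) • f := by rwa [sub_eq_zero] at hc1
  rw [hf'] at hm
  exact ⟨(h, h'), ⟨f, hm⟩, by linear_combination (norm := module) -hc2⟩

lemma unitary_of (Γ : Set ((E × E) × (F × F))) (hG : GreenPair Γ)
    (hsa : adjR (mainTransform Γ) = mainTransform Γ) : invR Γ = kreinAdj Γ := by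
  ext q
  obtain ⟨⟨k1, k2⟩, ⟨g1, g2⟩⟩ := q
  constructor
  · intro hmem p hp
    have hGr := hG p hp ((g1, g2), (k1, k2)) hmem
    simp only at hGr
    simp only [kIP]
    linear_combination (-Complex.I) * hGr
  · intro hk
    have hadj : (pairHK g1 k1, pairHK g2 (-k2)) ∈ adjR (mainTransform Γ) := by
      rintro r ⟨f, f', h, h', hm, rfl⟩
      simp only
      rw [inner_pairHK, inner_pairHK, inner_neg_right, inner_neg_left]
      have hkk := hk ((f, f'), (h, h')) hm
      simp only [kIP] at hkk
      linear_combination Complex.I * hkk +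
        (⟪g1, f'⟫ - ⟪k1, h'⟫ - ⟪g2, f⟫ + ⟪k2, h⟫) * Complex.I_sq
    rw [hsa] at hadj
    obtain ⟨f, f', h, h', hm, heq⟩ := hadj
    have h1 : pairHK g1 k1 = pairHK f h := congrArg Prod.fst heq
    have h2 : pairHK g2 (-k2) = pairHK f' (-h') := congrArg Prod.snd heq
    obtain ⟨ea, eb⟩ := pairHK_inj h1
    obtain ⟨ec, ed⟩ := pairHK_inj h2
    have hk2 : k2 = h' := neg_injective ed
    show ((g1, g2), (k1, k2)) ∈ Γ
    rw [ea, eb, ec, hk2]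
    exact hm

end AuxPair

/-- analytic extrapolation principle at a real regular point via the main
transform of an isometric boundary pair. -/
theorem statement19 (A : Set (E × E)) (Γ : Set ((E × E) × (F × F)))
    (hA : IsClosedSymRel A) (hΓ : IsIsomPair A Γ) (hdense : IsDomDense A Γ)
    (Ht : Set (E × E)) (hHsa : Ht = adjR Ht) (hAH : A ⊆ Ht) (hHT : Ht ⊆ domR Γ)
    (x : ℝ) (hx : BddInv (shiftSub Ht ((x : ℂ)))) :
    -- (i)
    ((adjR (weyl Γ ((x : ℂ))) = weyl Γ ((x : ℂ)) ∧
        BddInv (shiftAdd (weyl Γ ((x : ℂ))) ((x : ℂ)))) ↔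
      BddInv (shiftSub (mainTransform Γ) ((x : ℂ)))) ∧
    -- (ii)
    ((adjR (weyl Γ ((x : ℂ))) = weyl Γ ((x : ℂ)) ∧
        BddInv (shiftAdd (weyl Γ ((x : ℂ))) ((x : ℂ)))) →
      adjR (mainTransform Γ) = mainTransform Γ ∧ invR Γ = kreinAdj Γ) := by
  obtain ⟨hlin, hdomsub, hG⟩ := hΓ
  have hHsurj : ∀ u : E, ∃ q ∈ Ht, q.2 - (x : ℂ) • q.1 = u := by
    intro u
    obtain ⟨p, ⟨q, hq, rfl⟩, hv⟩ := hx.1 u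
    exact ⟨q, hq, hv⟩
  have hAsym := mt_sym Γ hG
  have hAcl := mt_clrel Γ hlin
  have hMsym := weyl_sym Γ hG x
  have hMcl := weyl_clrel Γ hlin ((x : ℝ) : ℂ)
  -- from the left-hand conditions, surjectivity of the shifted main transform
  have fwd : (adjR (weyl Γ ((x : ℂ))) = weyl Γ ((x : ℂ)) ∧
      BddInv (shiftAdd (weyl Γ ((x : ℂ))) ((x : ℂ)))) →
      ∀ v : WithLp 2 (E × F), ∃ p ∈ mainTransform Γ, p.2 - (x : ℂ) • p.1 = v := by
    rintro ⟨_, hMbdd⟩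
    have hMsurj : ∀ w : F, ∃ p ∈ weyl Γ ((x : ℝ) : ℂ), p.2 + (x : ℂ) • p.1 = w := by
      intro w
      obtain ⟨p, ⟨q, hq, rfl⟩, hv⟩ := hMbdd.1 w
      exact ⟨q, hq, hv⟩
    exact mt_surj Γ hlin Ht hHT x hHsurj hMsurj
  refine ⟨⟨fun hcond => ?_, fun hAbdd => ?_⟩, fun hcond => ?_⟩
  · -- forward direction of (i)
    exact bddinv_of _ hAcl hAsym x (fwd hcond)
  · -- backward direction of (i)
    have hAsurj : ∀ v : WithLp 2 (E × F), ∃ p ∈ mainTransform Γ, p.2 - (x : ℂ) • p.1 = v := by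
      intro v
      obtain ⟨p, ⟨q, hq, rfl⟩, hv⟩ := hAbdd.1 v
      exact ⟨q, hq, hv⟩
    have hMsurj := M_surj Γ x hAsurj
    have hMsurj' : ∀ w : F, ∃ p ∈ weyl Γ ((x : ℝ) : ℂ), p.2 - (((-x : ℝ) : ℝ) : ℂ) • p.1 = w := by
      intro w
      obtain ⟨p, hp, hv⟩ := hMsurj w
      refine ⟨p, hp, ?_⟩
      push_cast
      rw [neg_smul, sub_neg_eq_add]
      exact hv
    refine ⟨sa_of_sym_surj _ hMsym (-x) hMsurj', ?_⟩
    have hres := bddinv_of _ hMcl hMsym (-x) hMsurj'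
    rwa [shiftAdd_eq_shiftSub_neg x]
  · -- (ii)
    have hAsurj := fwd hcond
    have hsa : adjR (mainTransform Γ) = mainTransform Γ :=
      sa_of_sym_surj _ hAsym x hAsurj
    exact ⟨hsa, unitary_of Γ hG hsa⟩


end BT
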